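/- arXiv:2307.13033 — 5 statements merged into one kernel-verified Lean document; each statement's English description precedes it below -/
import Mathlib

section
/- Let a, n be natural numbers, and for each j ∈ {0,…,2^a−1} let U_j be an n×n unitary complex matrix and α_j ≥ 0 a real number, with α := Σ_j α_j > 0 and A := Σ_j α_j U_j. Let ε > 0 and let c ∈ ℂ^{2^a} be a vector with ‖c‖₂ = 1 satisfying ‖c − v‖₂ ≤ ε/(2·α·√(2^a)), where v ∈ ℝ^{2^a} is the vector with entries v_j := √(α_j/α). Then ‖α·Σ_j c_j·conj(c_j)·U_j − A‖ ≤ ε. -/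
/-!
Since `αtot * ‖v j‖ ^ 2 = α j`, the error matrix is `Σ j, αtot * (‖c j‖ ^ 2 - ‖v j‖ ^ 2) • U j`.
Unitaries have norm at most one, and `|‖c j‖ ^ 2 - ‖v j‖ ^ 2| ≤ ‖c j - v j‖ * (‖c j‖ + ‖v j‖)`, so by
Cauchy–Schwarz the error is at most `αtot * ‖c - v‖ * (‖c‖ + ‖v‖) = 2 * αtot * ‖c - v‖ ≤ ε / √(2 ^ a)`.
-/

open scoped Matrix.Norms.L2Operator

theorem CStarRing.norm_le_one_of_mem_unitary {E : Type*} [NormedRing E] [StarRing E]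
    [CStarRing E] {U : E} (hU : U ∈ unitary E) : ‖U‖ ≤ 1 := by
  rcases subsingleton_or_nontrivial E with _ | _
  · simp [Subsingleton.elim U 0]
  · exact (CStarRing.norm_of_mem_unitary hU).le

theorem norm_sum_smul_le_of_norm_le_one {ι 𝕜 E : Type*} [NormedField 𝕜]
    [SeminormedAddCommGroup E] [NormedSpace 𝕜 E] (s : Finset ι) (w : ι → 𝕜) {U : ι → E}
    (hU : ∀ i, ‖U i‖ ≤ 1) : ‖∑ i ∈ s, w i • U i‖ ≤ ∑ i ∈ s, ‖w i‖ :=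
  (norm_sum_le _ _).trans <| Finset.sum_le_sum fun i _ =>
    (norm_smul_le _ _).trans <| mul_le_of_le_one_right (norm_nonneg _) (hU i)

theorem abs_norm_sq_sub_norm_sq_le {E : Type*} [SeminormedAddCommGroup E] (a b : E) :
    |‖a‖ ^ 2 - ‖b‖ ^ 2| ≤ ‖a - b‖ * (‖a‖ + ‖b‖) := by
  rw [sq_sub_sq, abs_mul, abs_of_nonneg (by positivity : 0 ≤ ‖a‖ + ‖b‖), mul_comm]
  gcongr
  exact abs_norm_sub_norm_le a b

namespace EuclideanSpace

variable {𝕜 ι : Type*} [RCLike 𝕜] [Fintype ι]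

theorem sum_norm_mul_norm_le (x y : EuclideanSpace 𝕜 ι) :
    ∑ i, ‖x i‖ * ‖y i‖ ≤ ‖x‖ * ‖y‖ := by
  rw [EuclideanSpace.norm_eq x, EuclideanSpace.norm_eq y]
  exact Real.sum_mul_le_sqrt_mul_sqrt _ _ _

theorem sum_abs_norm_sq_sub_norm_sq_le (x y : EuclideanSpace 𝕜 ι) :
    ∑ i, |‖x i‖ ^ 2 - ‖y i‖ ^ 2| ≤ ‖x - y‖ * (‖x‖ + ‖y‖) :=
  calc ∑ i, |‖x i‖ ^ 2 - ‖y i‖ ^ 2|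
      ≤ ∑ i, ‖(x - y) i‖ * ‖x i‖ + ∑ i, ‖(x - y) i‖ * ‖y i‖ := by
        rw [← Finset.sum_add_distrib]
        gcongr with i
        simpa [mul_add] using abs_norm_sq_sub_norm_sq_le (x i) (y i)
    _ ≤ ‖x - y‖ * ‖x‖ + ‖x - y‖ * ‖y‖ := by
        gcongr <;> exact sum_norm_mul_norm_le _ _
    _ = ‖x - y‖ * (‖x‖ + ‖y‖) := (mul_add _ _ _).symm

end EuclideanSpace

/-- **Error propagation of PREP** (paper's Lemma on PREP error).
If `c` is an `ε/(2·α·√(2^a))`-precise approximation (in Euclidean norm) of the exact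
PREP state `v` with entries `√(αⱼ/α)`, then the block-encoded matrix
`α·Σⱼ cⱼ·conj(cⱼ)·Uⱼ` is `ε`-close in spectral norm to `A = Σⱼ αⱼ·Uⱼ`. -/
theorem prep_error_propagation (a n : ℕ)
    (U : Fin (2 ^ a) → Matrix (Fin n) (Fin n) ℂ)
    (hU : ∀ j, U j ∈ Matrix.unitaryGroup (Fin n) ℂ)
    (α : Fin (2 ^ a) → ℝ) (hα : ∀ j, 0 ≤ α j)
    (αtot : ℝ) (hαtot : αtot = ∑ j, α j) (hαpos : 0 < αtot)
    (A : Matrix (Fin n) (Fin n) ℂ) (hA : A = ∑ j, (α j : ℂ) • U j)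
    (ε : ℝ) (hε : 0 < ε)
    (c : EuclideanSpace ℂ (Fin (2 ^ a))) (hc : ‖c‖ = 1)
    (v : EuclideanSpace ℂ (Fin (2 ^ a)))
    (hv : ∀ j, v j = ((Real.sqrt (α j / αtot) : ℝ) : ℂ))
    (hdist : ‖c - v‖ ≤ ε / (2 * αtot * Real.sqrt (2 ^ a))) :
    ‖(αtot : ℂ) • (∑ j, (c j * (starRingEnd ℂ) (c j)) • U j) - A‖ ≤ ε := by
  have hv_sq : ∀ j, ‖v j‖ ^ 2 = α j / αtot := fun j => by
    rw [hv, Complex.norm_real, Real.norm_eq_abs, sq_abs,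
      Real.sq_sqrt (div_nonneg (hα j) hαpos.le)]
  have hv_norm : ‖v‖ = 1 := by
    rw [← pow_eq_one_iff_of_nonneg (norm_nonneg v) two_ne_zero, EuclideanSpace.norm_sq_eq]
    simp_rw [hv_sq]
    rw [← Finset.sum_div, ← hαtot, div_self hαpos.ne']
  have hdiff : (αtot : ℂ) • (∑ j, (c j * (starRingEnd ℂ) (c j)) • U j) - A
      = ∑ j, ((αtot * (‖c j‖ ^ 2 - ‖v j‖ ^ 2) : ℝ) : ℂ) • U j := by
    simp_rw [hA, hv_sq, Finset.smul_sum, ← Finset.sum_sub_distrib, smul_smul, ← sub_smul,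
      Complex.mul_conj']
    refine Finset.sum_congr rfl fun j _ => ?_
    push_cast
    rw [mul_sub, mul_div_cancel₀ _ (Complex.ofReal_ne_zero.mpr hαpos.ne')]
  calc _ ≤ ∑ j, ‖((αtot * (‖c j‖ ^ 2 - ‖v j‖ ^ 2) : ℝ) : ℂ)‖ := by
        rw [hdiff]
        exact norm_sum_smul_le_of_norm_le_one _ _
          fun j => CStarRing.norm_le_one_of_mem_unitary (hU j)
    _ = αtot * ∑ j, |‖c j‖ ^ 2 - ‖v j‖ ^ 2| := by
        simp_rw [Complex.norm_real, Real.norm_eq_abs, abs_mul, abs_of_pos hαpos, Finset.mul_sum]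
    _ ≤ αtot * (‖c - v‖ * (‖c‖ + ‖v‖)) := by
        gcongr
        exact EuclideanSpace.sum_abs_norm_sq_sub_norm_sq_le c v
    _ ≤ αtot * (ε / (2 * αtot * Real.sqrt (2 ^ a)) * 2) := by
        rw [hc, hv_norm, one_add_one_eq_two]
        gcongr
    _ = ε / Real.sqrt (2 ^ a) := by
        field_simp
    _ ≤ ε := div_le_self hε.le (Real.one_le_sqrt.mpr (one_le_pow₀ one_le_two))
end

section
/- Let s, a, b, m be natural numbers with 1 ≤ m ≤ 2^b, let α, β > 0 and ε₁, ε₂ ≥ 0. Let y : {0,…,m−1} → ℂ with Σ_j |y_j| ≤ β, let A_j be 2^s×2^s complex matrices and set A := Σ_{j<m} y_j·A_j. Suppose each U_j (for j < m) is a unitary matrix on ℂ^{2^a}⊗ℂ^{2^s} that is an (α,a,ε₂)-block-encoding of A_j. Let P_L, P_R be 2^b×2^b unitary matrices and set c_j := (P_L)_{j,0} and d_j := (P_R)_{j,0}; assume Σ_{j<m} |β·conj(c_j)·d_j − y_j| ≤ ε₁ and conj(c_j)·d_j = 0 for all m ≤ j < 2^b. Define W := Σ_{j<m} E_{j,j}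 ⊗ U_j + (I_{2^b} − Σ_{j<m} E_{j,j}) ⊗ I_{2^a·2^s}, where E_{j,j} is a standard matrix unit. Then ‖A − α·β·(⟨0|^{⊗b}⊗⟨0|^{⊗a}⊗I_{2^s})·(P_L†⊗I)·W·(P_R⊗I)·(|0⟩^{⊗b}⊗|0⟩^{⊗a}⊗I_{2^s})‖ ≤ α·ε₁ + β·ε₂. -/
open scoped Matrix.Norms.L2Operator Kronecker Matrix

/-!
With `c j = PL j 0` and `d j = PR j 0`, the top-left block of `(PLᴴ ⊗ 1) * W * (PR ⊗ 1)` is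
`∑ j, conj (c j) * d j • Bⱼ`, where `Bⱼ` is the top-left block of `U j`: the identity part of `W`
contributes `(∑_{q ≥ m} conj (c q) * d q) • 1 = 0`. Then
`A - αβ ∑ conj (c j) d j • Bⱼ = ∑ y j • (A j - α Bⱼ) + ∑ (y j - β conj (c j) d j) • α Bⱼ`,
and since a block of a unitary has norm at most `1`, the two sums are bounded by `β ε₂` and `α ε₁`.
-/

namespace Matrix

section L2OpNorm

variable {𝕜 : Type*} [RCLike 𝕜] {l m n o : Type*} [Fintype l] [Fintype m] [Fintype n] [Fintype o]

lemma l2_opNorm_one_le [DecidableEq n] : ‖(1 : Matrix n n 𝕜)‖ ≤ 1 := by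
  rw [cstar_norm_def, map_one]
  exact ContinuousLinearMap.norm_id_le

lemma l2_opNorm_le_one_of_conjTranspose_mul_self_eq_one [DecidableEq n] {A : Matrix m n 𝕜}
    (h : Aᴴ * A = 1) : ‖A‖ ≤ 1 := by
  have hsq : ‖A‖ * ‖A‖ ≤ 1 := by
    rw [← l2_opNorm_conjTranspose_mul_self, h]
    exact l2_opNorm_one_le
  nlinarith [norm_nonneg A]

lemma l2_opNorm_le_one_of_mem_unitaryGroup [DecidableEq n] {U : Matrix n n 𝕜}
    (hU : U ∈ unitaryGroup n 𝕜) : ‖U‖ ≤ 1 :=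
  l2_opNorm_le_one_of_conjTranspose_mul_self_eq_one (mem_unitaryGroup_iff'.mp hU)

lemma l2_opNorm_one_submatrix_id_le_one [DecidableEq n] [DecidableEq o] {e : o → n}
    (he : Function.Injective e) : ‖(1 : Matrix n n 𝕜).submatrix id e‖ ≤ 1 := by
  refine l2_opNorm_le_one_of_conjTranspose_mul_self_eq_one ?_
  rw [conjTranspose_submatrix, conjTranspose_one, ← submatrix_mul _ _ _ _ _ Function.bijective_id,
    one_mul, submatrix_one _ he]

lemma l2_opNorm_submatrix_le [DecidableEq n] [DecidableEq o]
    (M : Matrix m n 𝕜) {e₁ : l → m} {e₂ : o → n}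
    (he₁ : Function.Injective e₁) (he₂ : Function.Injective e₂) :
    ‖M.submatrix e₁ e₂‖ ≤ ‖M‖ := by
  classical
  have hfactor : M.submatrix e₁ e₂ =
      ((1 : Matrix m m 𝕜).submatrix id e₁)ᴴ * M * (1 : Matrix n n 𝕜).submatrix id e₂ := by
    ext i j
    simp [mul_apply, one_apply]
  calc ‖M.submatrix e₁ e₂‖
      ≤ ‖((1 : Matrix m m 𝕜).submatrix id e₁)ᴴ‖ * ‖M‖ * ‖(1 : Matrix n n 𝕜).submatrix id e₂‖ := by
        rw [hfactor]
        exact (l2_opNorm_mul _ _).trans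
          (mul_le_mul_of_nonneg_right (l2_opNorm_mul _ _) (norm_nonneg _))
    _ ≤ 1 * ‖M‖ * 1 := by
        rw [l2_opNorm_conjTranspose]
        gcongr
        · exact l2_opNorm_one_submatrix_id_le_one he₁
        · exact l2_opNorm_one_submatrix_id_le_one he₂
    _ = ‖M‖ := by ring

end L2OpNorm

section Kronecker

variable {α ι κ l m n : Type*} [Fintype ι]

lemma conjTranspose_mul_single_one_mul_apply [DecidableEq ι] [Semiring α] [Star α]
    (P : Matrix ι m α) (Q : Matrix ι n α) (q : ι) (i : m) (k : n) :
    (Pᴴ * single q q (1 : α) * Q) i k = star (P q i) * Q q k := by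
  rw [Matrix.mul_assoc, mul_apply, Finset.sum_eq_single q]
  · rw [single_mul_apply_same, one_mul, conjTranspose_apply]
  · intro r _ hr
    rw [single_mul_apply_of_ne _ _ _ _ _ hr, mul_zero]
  · simp

lemma conjTranspose_mul_one_sub_sum_single_mul_apply_eq_zero [DecidableEq ι] [Ring α] [Star α]
    [Fintype κ] {e : κ → ι} (he : Function.Injective e) (P : Matrix ι m α) (Q : Matrix ι n α)
    (i : m) (k : n)
    (h : ∀ q ∉ Set.range e, star (P q i) * Q q k = 0) :
    (Pᴴ * ((1 : Matrix ι ι α) - ∑ j, single (e j) (e j) (1 : α)) * Q) i k = 0 := by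
  simp only [Matrix.mul_sub, Matrix.sub_mul, Matrix.mul_one, Matrix.mul_sum, Matrix.sum_mul,
    sub_apply, sum_apply, conjTranspose_mul_single_one_mul_apply]
  rw [Fintype.sum_of_injective e he _ (fun q => star (P q i) * Q q k) h fun _ => rfl, sub_eq_zero,
    mul_apply]
  rfl

lemma kronecker_one_mul_kronecker_mul_kronecker_one [CommSemiring α] [Fintype κ] [DecidableEq κ]
    (P : Matrix l ι α) (X : Matrix ι ι α) (Q : Matrix ι m α) (V : Matrix κ κ α) :
    (P ⊗ₖ (1 : Matrix κ κ α)) * (X ⊗ₖ V) * (Q ⊗ₖ (1 : Matrix κ κ α)) = (P * X * Q) ⊗ₖ V := by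
  rw [← mul_kronecker_mul, ← mul_kronecker_mul, one_mul, mul_one]

end Kronecker

end Matrix

lemma norm_sum_smul_sub_smul_sum_smul_le {ι E : Type*} [Fintype ι] [SeminormedAddCommGroup E]
    [NormedSpace ℂ E] {y z : ι → ℂ} {A B : ι → E} {α β ε₁ ε₂ : ℝ} (hα : 0 ≤ α) (hε₂ : 0 ≤ ε₂)
    (hy : ∑ j, ‖y j‖ ≤ β) (hz : ∑ j, ‖(β : ℂ) * z j - y j‖ ≤ ε₁)
    (hA : ∀ j, ‖A j - (α : ℂ) • B j‖ ≤ ε₂) (hB : ∀ j, ‖B j‖ ≤ 1) :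
    ‖∑ j, y j • A j - ((α * β : ℝ) : ℂ) • ∑ j, z j • B j‖ ≤ α * ε₁ + β * ε₂ := by
  have hsplit : ∑ j, y j • A j - ((α * β : ℝ) : ℂ) • ∑ j, z j • B j =
      ∑ j, (y j • (A j - (α : ℂ) • B j) + (y j - β * z j) • (α : ℂ) • B j) := by
    rw [Finset.smul_sum, ← Finset.sum_sub_distrib]
    refine Finset.sum_congr rfl fun j _ => ?_
    push_cast
    module
  have hterm : ∀ j, ‖y j • (A j - (α : ℂ) • B j) + (y j - β * z j) • (α : ℂ) • B j‖ ≤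
      ‖y j‖ * ε₂ + ‖(β : ℂ) * z j - y j‖ * α := fun j => calc
    _ ≤ ‖y j • (A j - (α : ℂ) • B j)‖ + ‖(y j - β * z j) • (α : ℂ) • B j‖ := norm_add_le _ _
    _ = ‖y j‖ * ‖A j - (α : ℂ) • B j‖ + ‖(β : ℂ) * z j - y j‖ * (α * ‖B j‖) := by
      rw [norm_smul, norm_smul, norm_smul, norm_sub_rev (y j), Complex.norm_real,
        Real.norm_of_nonneg hα]
    _ ≤ ‖y j‖ * ε₂ + ‖(β : ℂ) * z j - y j‖ * (α * 1) := by
      gcongr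
      exacts [hA j, hB j]
    _ = ‖y j‖ * ε₂ + ‖(β : ℂ) * z j - y j‖ * α := by rw [mul_one]
  calc _ ≤ ∑ j, (‖y j‖ * ε₂ + ‖(β : ℂ) * z j - y j‖ * α) :=
        hsplit ▸ norm_sum_le_of_le _ fun j _ => hterm j
    _ = (∑ j, ‖y j‖) * ε₂ + α * ∑ j, ‖(β : ℂ) * z j - y j‖ := by
      rw [Finset.sum_add_distrib, ← Finset.sum_mul, ← Finset.sum_mul, mul_comm α]
    _ ≤ β * ε₂ + α * ε₁ := by gcongr
    _ = α * ε₁ + β * ε₂ := add_comm _ _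

theorem linear_combination_of_block_encodings_general
    (s a b m : ℕ) (hm : m ≤ 2 ^ b)
    (α β : ℝ) (hα : 0 < α)
    (ε₁ ε₂ : ℝ) (hε₂ : 0 ≤ ε₂)
    (y : Fin m → ℂ) (hy : ∑ j, ‖y j‖ ≤ β)
    (A : Fin m → Matrix (Fin (2 ^ s)) (Fin (2 ^ s)) ℂ)
    (Atot : Matrix (Fin (2 ^ s)) (Fin (2 ^ s)) ℂ) (hAtot : Atot = ∑ j, y j • A j)
    (U : Fin m → Matrix (Fin (2 ^ a) × Fin (2 ^ s)) (Fin (2 ^ a) × Fin (2 ^ s)) ℂ)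
    (hUunitary : ∀ j, U j ∈ Matrix.unitaryGroup (Fin (2 ^ a) × Fin (2 ^ s)) ℂ)
    -- each `U j` is an `(α, a, ε₂)`-block-encoding of `A j`
    (hUblock : ∀ j, ‖A j -
      (α : ℂ) • Matrix.of (fun i k : Fin (2 ^ s) => U j (0, i) (0, k))‖ ≤ ε₂)
    (PL PR : Matrix (Fin (2 ^ b)) (Fin (2 ^ b)) ℂ)
    (c d : Fin (2 ^ b) → ℂ)
    (hc : ∀ j, c j = PL j 0) (hd : ∀ j, d j = PR j 0)
    -- `(PL, PR)` is a `(β, b, ε₁)`-state-preparation pair for `y`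
    (hprep : ∑ j : Fin m,
      ‖(β : ℂ) * (starRingEnd ℂ) (c (Fin.castLE hm j)) * d (Fin.castLE hm j) - y j‖
        ≤ ε₁)
    (hzero : ∀ j : Fin (2 ^ b), m ≤ (j : ℕ) → (starRingEnd ℂ) (c j) * d j = 0)
    (W : Matrix (Fin (2 ^ b) × (Fin (2 ^ a) × Fin (2 ^ s)))
          (Fin (2 ^ b) × (Fin (2 ^ a) × Fin (2 ^ s))) ℂ)
    (hW : W = (∑ j : Fin m,
        Matrix.single (Fin.castLE hm j) (Fin.castLE hm j) (1 : ℂ) ⊗ₖ U j)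
      + ((1 : Matrix (Fin (2 ^ b)) (Fin (2 ^ b)) ℂ)
          - ∑ j : Fin m, Matrix.single (Fin.castLE hm j) (Fin.castLE hm j) (1 : ℂ)) ⊗ₖ
        (1 : Matrix (Fin (2 ^ a) × Fin (2 ^ s)) (Fin (2 ^ a) × Fin (2 ^ s)) ℂ)) :
    ‖Atot - ((α * β : ℝ) : ℂ) • Matrix.of (fun i k : Fin (2 ^ s) =>
        ((PLᴴ ⊗ₖ (1 : Matrix (Fin (2 ^ a) × Fin (2 ^ s)) (Fin (2 ^ a) × Fin (2 ^ s)) ℂ)) * W *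
          (PR ⊗ₖ (1 : Matrix (Fin (2 ^ a) × Fin (2 ^ s)) (Fin (2 ^ a) × Fin (2 ^ s)) ℂ)))
          (0, (0, i)) (0, (0, k)))‖
      ≤ α * ε₁ + β * ε₂ := by
  obtain rfl : c = fun j => PL j 0 := funext hc
  obtain rfl : d = fun j => PR j 0 := funext hd
  simp only [starRingEnd_apply] at hprep hzero
  set e : Fin m → Fin (2 ^ b) := Fin.castLE hm with he
  have hcompl : (PLᴴ * (1 - ∑ j, Matrix.single (e j) (e j) (1 : ℂ)) * PR) 0 0 = 0 := by
    refine Matrix.conjTranspose_mul_one_sub_sum_single_mul_apply_eq_zero (Fin.castLE_injective hm)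
      PL PR 0 0 fun q hq => hzero q ?_
    simpa [he, Fin.range_castLE] using hq
  have hblock : Matrix.of (fun i k : Fin (2 ^ s) =>
      ((PLᴴ ⊗ₖ (1 : Matrix (Fin (2 ^ a) × Fin (2 ^ s)) (Fin (2 ^ a) × Fin (2 ^ s)) ℂ)) * W *
        (PR ⊗ₖ (1 : Matrix (Fin (2 ^ a) × Fin (2 ^ s)) (Fin (2 ^ a) × Fin (2 ^ s)) ℂ)))
        (0, (0, i)) (0, (0, k))) =
      ∑ j, (star (PL (e j) 0) * PR (e j) 0) • (U j).submatrix (Prod.mk 0) (Prod.mk 0) := by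
    simp only [hW, Matrix.mul_add, Matrix.add_mul, Matrix.mul_sum, Matrix.sum_mul,
      Matrix.kronecker_one_mul_kronecker_mul_kronecker_one]
    ext i k
    simp [Matrix.sum_apply, hcompl, Matrix.conjTranspose_mul_single_one_mul_apply]
  rw [hAtot, hblock]
  refine norm_sum_smul_sub_smul_sum_smul_le hα.le hε₂ hy (by simpa only [mul_assoc] using hprep)
    hUblock fun j => ?_
  exact (Matrix.l2_opNorm_submatrix_le _ (Prod.mk_right_injective 0)
    (Prod.mk_right_injective 0)).trans (Matrix.l2_opNorm_le_one_of_mem_unitaryGroup (hUunitary j))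

/-- **Linear combination of block-encoded matrices** via a state-preparation pair
(improved version of Lemma 29 of Gilyén et al., as in the paper). -/
theorem linear_combination_of_block_encodings
    (s a b m : ℕ) (hm1 : 1 ≤ m) (hm : m ≤ 2 ^ b)
    (α β : ℝ) (hα : 0 < α) (hβ : 0 < β)
    (ε₁ ε₂ : ℝ) (hε₁ : 0 ≤ ε₁) (hε₂ : 0 ≤ ε₂)
    (y : Fin m → ℂ) (hy : ∑ j, ‖y j‖ ≤ β)
    (A : Fin m → Matrix (Fin (2 ^ s)) (Fin (2 ^ s)) ℂ)
    (Atot : Matrix (Fin (2 ^ s)) (Fin (2 ^ s)) ℂ) (hAtot : Atot = ∑ j, y j • A j)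
    (U : Fin m → Matrix (Fin (2 ^ a) × Fin (2 ^ s)) (Fin (2 ^ a) × Fin (2 ^ s)) ℂ)
    (hUunitary : ∀ j, U j ∈ Matrix.unitaryGroup (Fin (2 ^ a) × Fin (2 ^ s)) ℂ)
    -- each `U j` is an `(α, a, ε₂)`-block-encoding of `A j`
    (hUblock : ∀ j, ‖A j -
      (α : ℂ) • Matrix.of (fun i k : Fin (2 ^ s) => U j (0, i) (0, k))‖ ≤ ε₂)
    (PL PR : Matrix (Fin (2 ^ b)) (Fin (2 ^ b)) ℂ)
    (hPL : PL ∈ Matrix.unitaryGroup (Fin (2 ^ b)) ℂ)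
    (hPR : PR ∈ Matrix.unitaryGroup (Fin (2 ^ b)) ℂ)
    (c d : Fin (2 ^ b) → ℂ)
    (hc : ∀ j, c j = PL j 0) (hd : ∀ j, d j = PR j 0)
    -- `(PL, PR)` is a `(β, b, ε₁)`-state-preparation pair for `y`
    (hprep : ∑ j : Fin m,
      ‖(β : ℂ) * (starRingEnd ℂ) (c (Fin.castLE hm j)) * d (Fin.castLE hm j) - y j‖
        ≤ ε₁)
    (hzero : ∀ j : Fin (2 ^ b), m ≤ (j : ℕ) → (starRingEnd ℂ) (c j) * d j = 0)
    (W : Matrix (Fin (2 ^ b) × (Fin (2 ^ a) × Fin (2 ^ s)))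
          (Fin (2 ^ b) × (Fin (2 ^ a) × Fin (2 ^ s))) ℂ)
    (hW : W = (∑ j : Fin m,
        Matrix.single (Fin.castLE hm j) (Fin.castLE hm j) (1 : ℂ) ⊗ₖ U j)
      + ((1 : Matrix (Fin (2 ^ b)) (Fin (2 ^ b)) ℂ)
          - ∑ j : Fin m, Matrix.single (Fin.castLE hm j) (Fin.castLE hm j) (1 : ℂ)) ⊗ₖ
        (1 : Matrix (Fin (2 ^ a) × Fin (2 ^ s)) (Fin (2 ^ a) × Fin (2 ^ s)) ℂ)) :
    ‖Atot - ((α * β : ℝ) : ℂ) • Matrix.of (fun i k : Fin (2 ^ s) =>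
        ((PLᴴ ⊗ₖ (1 : Matrix (Fin (2 ^ a) × Fin (2 ^ s)) (Fin (2 ^ a) × Fin (2 ^ s)) ℂ)) * W *
          (PR ⊗ₖ (1 : Matrix (Fin (2 ^ a) × Fin (2 ^ s)) (Fin (2 ^ a) × Fin (2 ^ s)) ℂ)))
          (0, (0, i)) (0, (0, k)))‖
      ≤ α * ε₁ + β * ε₂ :=
  linear_combination_of_block_encodings_general s a b m hm α β hα ε₁ ε₂ hε₂ y hy A Atot hAtot U
    hUunitary hUblock PL PR c d hc hd hprep hzero W hW
end

section
/- For every integer d ≥ 1, the central finite-difference coefficients satisfy Σ_{k=−d}^{d} |c_{d,k}| ≤ 2·(ln d + 1). -/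
/-!
Since `d!/(d-|k|)! ≤ d^|k| ≤ (d+|k|)!/d!`, every coefficient satisfies `|c_{d,k}| ≤ 1/|k|`, so the
sum is at most twice the harmonic number `H_d ≤ 1 + ln d`.
-/

/-- The central finite-difference coefficients `c_{d,k}` of order `2d`:
`c_{d,k} = (-1)^(k+1) · (d!)² / (k·(d-k)!·(d+k)!)` for `k ≠ 0`, and `c_{d,0} = 0`. -/
noncomputable def centralFDCoeff (d : ℕ) (k : ℤ) : ℝ :=
  if k = 0 then 0
  else (-1 : ℝ) ^ (k + 1) * ((d.factorial : ℝ)) ^ 2 /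
    ((k : ℝ) * (((d : ℤ) - k).toNat.factorial : ℝ) * (((d : ℤ) + k).toNat.factorial : ℝ))

open Finset
open scoped Nat

theorem Nat.factorial_mul_factorial_le_factorial_sub_mul_factorial_add {d k : ℕ} (hk : k ≤ d) :
    d ! * d ! ≤ (d - k)! * (d + k)! := by
  have hdesc : d.descFactorial k ≤ (d + 1).ascFactorial k :=
    calc d.descFactorial k ≤ d ^ k := d.descFactorial_le_pow k
      _ ≤ (d + 1) ^ k := Nat.pow_le_pow_left d.le_succ k
      _ ≤ (d + 1).ascFactorial k := (d + 1).pow_succ_le_ascFactorial k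
  calc d ! * d ! = (d - k)! * d.descFactorial k * d ! := by rw [Nat.factorial_mul_descFactorial hk]
    _ ≤ (d - k)! * (d + 1).ascFactorial k * d ! := by gcongr
    _ = (d - k)! * (d + k)! := by rw [← Nat.factorial_mul_ascFactorial]; ring

theorem factorial_sq_le_factorial_toNat_sub_mul_factorial_toNat_add {d : ℕ} {k : ℤ}
    (hk : k.natAbs ≤ d) :
    (d ! : ℝ) ^ 2 ≤ ((d - k).toNat)! * ((d + k).toNat)! := by
  rw [sq]
  have key := Nat.factorial_mul_factorial_le_factorial_sub_mul_factorial_add hk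
  rcases Int.natAbs_eq k with h | h
  · rw [show (d - k).toNat = d - k.natAbs by omega, show (d + k).toNat = d + k.natAbs by omega]
    exact_mod_cast key
  · rw [show (d - k).toNat = d + k.natAbs by omega, show (d + k).toNat = d - k.natAbs by omega]
    exact_mod_cast key.trans_eq (mul_comm _ _)

theorem abs_centralFDCoeff_of_ne_zero (d : ℕ) {k : ℤ} (hk : k ≠ 0) :
    |centralFDCoeff d k| = (d ! : ℝ) ^ 2 / (|(k : ℝ)| * ((d - k).toNat)! * ((d + k).toNat)!) := by
  rw [centralFDCoeff, if_neg hk, abs_div, abs_mul, abs_zpow, abs_neg, abs_one, one_zpow, one_mul,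
    abs_mul, abs_mul, abs_pow, Nat.abs_cast, Nat.abs_cast, Nat.abs_cast]

theorem abs_centralFDCoeff_le_inv_abs {d : ℕ} {k : ℤ} (hk : k.natAbs ≤ d) :
    |centralFDCoeff d k| ≤ |(k : ℝ)|⁻¹ := by
  rcases eq_or_ne k 0 with rfl | hk0
  · simp [centralFDCoeff]
  rw [abs_centralFDCoeff_of_ne_zero d hk0, mul_assoc, div_mul_eq_div_div_swap, div_eq_mul_inv]
  exact mul_le_of_le_one_left (by positivity) <| (div_le_one (by positivity)).2 <|
    factorial_sq_le_factorial_toNat_sub_mul_factorial_toNat_add hk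

-- The term `k = 0` contributes the junk value `|0|⁻¹ = 0`.
theorem sum_Icc_neg_inv_abs_eq_two_mul_harmonic (n : ℕ) :
    ∑ k ∈ Icc (-(n : ℤ)) n, |(k : ℝ)|⁻¹ = 2 * harmonic n := by
  induction n with
  | zero => simp
  | succ n ih =>
    have hIcc : Icc (-((n + 1 : ℕ) : ℤ)) (n + 1 : ℕ)
        = insert (-((n : ℤ) + 1)) (insert ((n : ℤ) + 1) (Icc (-(n : ℤ)) n)) := by
      ext x; simp only [mem_Icc, mem_insert]; omega
    rw [hIcc, sum_insert (by simp only [mem_insert, mem_Icc]; omega), sum_insert (by simp), ih, harmonic_succ]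
    push_cast
    rw [abs_neg, abs_of_pos (by positivity)]
    ring

theorem sum_abs_centralFDCoeff_le_general (d : ℕ) :
    ∑ k ∈ Finset.Icc (-(d : ℤ)) (d : ℤ), |centralFDCoeff d k| ≤ 2 * (Real.log d + 1) := by
  calc ∑ k ∈ Icc (-(d : ℤ)) d, |centralFDCoeff d k|
      ≤ ∑ k ∈ Icc (-(d : ℤ)) d, |(k : ℝ)|⁻¹ :=
        sum_le_sum fun k hk ↦ abs_centralFDCoeff_le_inv_abs (by rw [mem_Icc] at hk; omega)
    _ = 2 * harmonic d := sum_Icc_neg_inv_abs_eq_two_mul_harmonic d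
    _ ≤ 2 * (Real.log d + 1) := by
        gcongr
        linarith [harmonic_le_one_add_log d]

/-- For every `d ≥ 1`, `Σ_{k=-d}^{d} |c_{d,k}| ≤ 2·(ln d + 1)`. -/
theorem sum_abs_centralFDCoeff_le (d : ℕ) (hd : 1 ≤ d) :
    ∑ k ∈ Finset.Icc (-(d : ℤ)) (d : ℤ), |centralFDCoeff d k| ≤ 2 * (Real.log d + 1) :=
  sum_abs_centralFDCoeff_le_general d
end

section
/- Let M ≥ 1, let A_1,…,A_M be n×n complex matrices, and let P_1,…,P_M be m×m complex matrices satisfying P_l² = P_l for all l, P_k·P_l = 0 for all k ≠ l, and Σ_{l=1}^{M} P_l = I_m. Then the ordered product of matrix exponentials satisfies ∏_{l=1}^{M} exp(A_l ⊗ P_l) = Σ_{l=1}^{M} exp(A_l) ⊗ P_l. -/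
/-!
Since the `P l` are complete orthogonal idempotents, `X ↦ ∑ l, X l ⊗ₖ P l` is a continuous
unital ring homomorphism out of the product ring `Fin M → Matrix (Fin n) (Fin n) ℂ`, so it
commutes with `exp`. The factor `A l ⊗ₖ P l` is the image of the tuple with `A l` in slot `l`
and `0` elsewhere, whose exponential has `exp (A l)` in slot `l` and `1` elsewhere; the ordered
product of these tuples is the tuple `(exp (A l))_l`, whose image is the right-hand side.
-/

open scoped Kronecker

open Matrix NormedSpace

namespace CompleteOrthogonalIdempotents

variable {R ι m n : Type*} [CommSemiring R] [Fintype ι] [Fintype m] [DecidableEq m]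
  [Fintype n] [DecidableEq n] {P : ι → Matrix m m R}

def kroneckerRingHom (hP : CompleteOrthogonalIdempotents P) :
    (ι → Matrix n n R) →+* Matrix (n × m) (n × m) R where
  toFun X := ∑ i, X i ⊗ₖ P i
  map_one' := by
    rw [← one_kronecker_one, ← hP.complete]
    exact (map_sum (kroneckerBilinear (R := R) (1 : Matrix n n R)) P Finset.univ).symm
  map_mul' X Y := by
    classical
    simp only [Finset.sum_mul_sum, ← mul_kronecker_mul, hP.mul_eq, apply_ite, kronecker_zero,
      Finset.sum_ite_eq, Finset.mem_univ, if_true, Pi.mul_apply]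
  map_zero' := by simp
  map_add' X Y := by simp only [Pi.add_apply, add_kronecker, Finset.sum_add_distrib]

lemma kroneckerRingHom_apply (hP : CompleteOrthogonalIdempotents P) (X : ι → Matrix n n R) :
    hP.kroneckerRingHom X = ∑ i, X i ⊗ₖ P i :=
  rfl

lemma kroneckerRingHom_single [DecidableEq ι] (hP : CompleteOrthogonalIdempotents P) (i : ι)
    (X : Matrix n n R) : hP.kroneckerRingHom (Pi.single i X) = X ⊗ₖ P i := by
  rw [kroneckerRingHom_apply, Finset.sum_eq_single i (fun j _ hj => by simp [hj]) (by simp)]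
  simp

lemma continuous_kroneckerRingHom [TopologicalSpace R] [IsTopologicalSemiring R]
    (hP : CompleteOrthogonalIdempotents P) :
    Continuous (hP.kroneckerRingHom : (ι → Matrix n n R) → Matrix (n × m) (n × m) R) :=
  continuous_finsetSum _ fun i _ => continuous_matrix fun _ _ =>
    ((continuous_apply i).matrix_elem _ _).mul continuous_const

end CompleteOrthogonalIdempotents

theorem List.prod_map_finRange_mulSingle {k : ℕ} {M : Fin k → Type*} [∀ i, Monoid (M i)]
    (x : ∀ i, M i) : ((List.finRange k).map fun i => Pi.mulSingle i (x i)).prod = x := by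
  have h := Finset.noncommProd_mulSingle x
  unfold Finset.noncommProd at h
  simpa only [Fin.univ_val_map, Multiset.noncommProd_coe, List.ofFn_eq_map] using h

theorem Pi.exp_single {ι 𝔸 : Type*} [Finite ι] [DecidableEq ι]
    [NormedRing 𝔸] [NormedAlgebra ℚ 𝔸] [CompleteSpace 𝔸]
    (i : ι) (x : 𝔸) : exp (Pi.single i x : ι → 𝔸) = Pi.mulSingle i (exp x) := by
  funext j
  rw [Pi.coe_exp]
  obtain rfl | hj := eq_or_ne j i
  · simp
  · simp [hj]

open scoped Matrix.Norms.Operator in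
theorem CompleteOrthogonalIdempotents.exp_kronecker {𝕂 ι m n : Type*} [RCLike 𝕂]
    [Fintype ι] [DecidableEq ι] [Fintype m] [DecidableEq m] [Fintype n] [DecidableEq n]
    {P : ι → Matrix m m 𝕂} (hP : CompleteOrthogonalIdempotents P) (i : ι) (X : Matrix n n 𝕂) :
    exp (X ⊗ₖ P i) = hP.kroneckerRingHom (Pi.mulSingle i (exp X)) := by
  have h :=
    map_exp (hP.kroneckerRingHom (n := n)) hP.continuous_kroneckerRingHom (Pi.single i X)
  rw [Pi.exp_single, hP.kroneckerRingHom_single] at h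
  exact h.symm

theorem prod_exp_kronecker_projectors_general (M n m : ℕ)
    (A : Fin M → Matrix (Fin n) (Fin n) ℂ) (P : Fin M → Matrix (Fin m) (Fin m) ℂ)
    (hidem : ∀ l, P l * P l = P l)
    (horth : ∀ k l, k ≠ l → P k * P l = 0)
    (hsum : ∑ l, P l = 1) :
    ((List.finRange M).map (fun l => NormedSpace.exp (A l ⊗ₖ P l))).prod =
      ∑ l, NormedSpace.exp (A l) ⊗ₖ P l := by
  have hP : CompleteOrthogonalIdempotents P := ⟨⟨hidem, horth⟩, hsum⟩
  calc ((List.finRange M).map fun l => exp (A l ⊗ₖ P l)).prod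
      = ((List.finRange M).map fun l => hP.kroneckerRingHom (Pi.mulSingle l (exp (A l)))).prod := by
        simp only [hP.exp_kronecker]
    _ = hP.kroneckerRingHom ((List.finRange M).map fun l => Pi.mulSingle l (exp (A l))).prod := by
        rw [map_list_prod, List.map_map]
        rfl
    _ = hP.kroneckerRingHom (fun l => exp (A l)) := by rw [List.prod_map_finRange_mulSingle]
    _ = ∑ l, exp (A l) ⊗ₖ P l := hP.kroneckerRingHom_apply _

/-- **Projector exponential** (paper's Lemma): for a complete family of mutually orthogonal
projectors `P_l`, the ordered product of the exponentials `exp(A_l ⊗ P_l)` equals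
`Σ_l exp(A_l) ⊗ P_l`. -/
theorem prod_exp_kronecker_projectors (M n m : ℕ) (hM : 1 ≤ M)
    (A : Fin M → Matrix (Fin n) (Fin n) ℂ) (P : Fin M → Matrix (Fin m) (Fin m) ℂ)
    (hidem : ∀ l, P l * P l = P l)
    (horth : ∀ k l, k ≠ l → P k * P l = 0)
    (hsum : ∑ l, P l = 1) :
    ((List.finRange M).map (fun l => NormedSpace.exp (A l ⊗ₖ P l))).prod =
      ∑ l, NormedSpace.exp (A l) ⊗ₖ P l :=
  prod_exp_kronecker_projectors_general M n m A P hidem horth hsum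
end

section
/- Define u_k := 1/(4 − 4^{1/(2k−1)}) for integers k ≥ 2, and define T : ℕ≥1 × ℝ → ℝ recursively by T(1,t) := t and T(k,t) := 4·T(k−1, u_k·t) + T(k−1, (4·u_k − 1)·t) for k ≥ 2. Then for every integer k ≥ 1 and every real t ≥ 0, T(k,t) ≤ 5^{k−1}·t. -/
/-!
For `k ≥ 2` the exponent `1/(2k−1)` is at most `1/2`, so `0 < 4^{1/(2k−1)} ≤ 2` and hence
`1/4 ≤ u_k ≤ 1/2`. Both segment times `u_k t` and `(4u_k − 1) t` are then nonnegative, so the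
induction hypothesis applies to them, and the five segments have total time `(8u_k − 1) t ≤ 5t`.
-/

/-- The Trotter–Suzuki recursion coefficient `u_k = 1/(4 − 4^{1/(2k−1)})`. -/
noncomputable def trotterCoeff (k : ℕ) : ℝ :=
  1 / (4 - (4 : ℝ) ^ ((1 : ℝ) / (2 * (k : ℝ) - 1)))

/-- Total evolution time `T(k, t)` of the `2k`-th order Trotter–Suzuki product formula:
`T(1, t) = t` and `T(k, t) = 4·T(k−1, u_k·t) + T(k−1, (4·u_k − 1)·t)` for `k ≥ 2`. -/
noncomputable def totalEvolTime : ℕ → ℝ → ℝ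
  | 0, t => t
  | 1, t => t
  | (k + 2), t =>
      4 * totalEvolTime (k + 1) (trotterCoeff (k + 2) * t) +
        totalEvolTime (k + 1) ((4 * trotterCoeff (k + 2) - 1) * t)

lemma four_rpow_one_div_two_mul_sub_one_le_two {k : ℕ} (hk : 2 ≤ k) :
    (4 : ℝ) ^ ((1 : ℝ) / (2 * (k : ℝ) - 1)) ≤ 2 := by
  have hk' : (2 : ℝ) ≤ k := by exact_mod_cast hk
  calc (4 : ℝ) ^ ((1 : ℝ) / (2 * (k : ℝ) - 1))
      ≤ (4 : ℝ) ^ ((1 : ℝ) / 2) := by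
        gcongr
        · norm_num
        · linarith
    _ = 2 := by
        rw [show (4 : ℝ) = 2 ^ (2 : ℝ) by norm_num, ← Real.rpow_mul (by norm_num)]
        norm_num

lemma trotterCoeff_mem_Icc {k : ℕ} (hk : 2 ≤ k) : trotterCoeff k ∈ Set.Icc (1 / 4) (1 / 2) := by
  have hpos : 0 < (4 : ℝ) ^ ((1 : ℝ) / (2 * (k : ℝ) - 1)) := by positivity
  have hle := four_rpow_one_div_two_mul_sub_one_le_two hk
  unfold trotterCoeff
  constructor
  · rw [le_div_iff₀ (by linarith)]
    linarith
  · rw [div_le_iff₀ (by linarith)]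
    linarith

lemma totalEvolTime_succ_le (k : ℕ) {t : ℝ} (ht : 0 ≤ t) :
    totalEvolTime (k + 1) t ≤ 5 ^ k * t := by
  induction k generalizing t with
  | zero => simp [totalEvolTime]
  | succ k ih =>
    obtain ⟨hu₁, hu₂⟩ := trotterCoeff_mem_Icc (k := k + 2) (by omega)
    set u := trotterCoeff (k + 2)
    calc totalEvolTime (k + 2) t
        = 4 * totalEvolTime (k + 1) (u * t) + totalEvolTime (k + 1) ((4 * u - 1) * t) := rfl
      _ ≤ 4 * (5 ^ k * (u * t)) + 5 ^ k * ((4 * u - 1) * t) := by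
          gcongr
          · exact ih (mul_nonneg (by linarith) ht)
          · exact ih (mul_nonneg (by linarith) ht)
      _ = 5 ^ k * ((8 * u - 1) * t) := by ring
      _ ≤ 5 ^ k * (5 * t) := by
          gcongr
          linarith
      _ = 5 ^ (k + 1) * t := by ring

/-- **Total evolution time of a higher-order product formula**: for all `k ≥ 1` and `t ≥ 0`,
`T(k, t) ≤ 5^{k−1}·t`. -/
theorem totalEvolTime_le (k : ℕ) (hk : 1 ≤ k) (t : ℝ) (ht : 0 ≤ t) :
    totalEvolTime k t ≤ 5 ^ (k - 1) * t := by
  obtain ⟨k, rfl⟩ := Nat.exists_eq_add_of_le' hk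
  simpa using totalEvolTime_succ_le k ht
end
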